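/- arXiv:1705.06352 — 4 statements merged into one kernel-verified Lean document; each statement's English description precedes it below -/
import Mathlib

section
/- For every dimension d ≥ 8, the constant b = 1 + d/2 − 7d(d−1)/E(d) satisfies b > 1, where E(d) = √((46d² − 291d − 49)(d−1)) + 7(d−1). -/
/-! Writing `c = 7(d - 1)` and `E = √P + c`, the claim `7d(d-1)/E < d/2` says `2c < √P + c`,
i.e. `c² < P`. Since `P - c² = 2d(d - 1)(23d - 170)`, this holds for every `d > 170/23`. -/

lemma mul_div_add_lt_half {x c s : ℝ} (hx : 0 < x) (hc : 0 < c) (hcs : c < s) :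
    x * c / (s + c) < x / 2 := by
  rw [div_lt_div_iff₀ (by linarith) two_pos]
  nlinarith

lemma seven_mul_sub_one_lt_sqrt {d : ℝ} (hd : 170 / 23 < d) :
    7 * (d - 1) < Real.sqrt ((46 * d ^ 2 - 291 * d - 49) * (d - 1)) := by
  rw [Real.lt_sqrt (by linarith)]
  have hgap : (46 * d ^ 2 - 291 * d - 49) * (d - 1) - (7 * (d - 1)) ^ 2
      = 2 * d * (d - 1) * (23 * d - 170) := by ring
  have hpos : 0 < 2 * d * (d - 1) * (23 * d - 170) := by
    have : 0 < d - 1 := by linarith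
    have : 0 < 23 * d - 170 := by linarith
    positivity
  linarith

theorem stmt_1 (d : ℝ) (hd : 8 ≤ d) :
    1 < 1 + d/2 - 7*d*(d-1) /
      (Real.sqrt ((46*d^2 - 291*d - 49) * (d - 1)) + 7*(d - 1)) := by
  have key := mul_div_add_lt_half (x := d) (by linarith) (by linarith)
    (seven_mul_sub_one_lt_sqrt (by linarith))
  rw [← mul_assoc, mul_comm d 7] at key
  linarith
end

section
/- For d = 9, the function φ₀(ρ) = 3ρ/√(2(155 − 74ρ²)) satisfies the self-similar wave map ODE (1−ρ²)φ₀''(ρ) + (8/ρ − 2ρ)φ₀'(ρ) − 8(φ₀(ρ) + 14φ₀(ρ)³ − 111φ₀(ρ)⁵)/ρ² = 0 for all ρ ∈ (0,1). -/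
/-!
With `s = √(310 - 148 ρ²)` one has `φ₀ = 3ρ / s`, `φ₀' = 930 / s³` and `φ₀'' = 412920 ρ / s⁵`.
Multiplying the left-hand side of the equation by `ρ² s⁵` leaves a polynomial in `ρ` and `s²`
that vanishes once `s²` is replaced by `310 - 148 ρ²`.
-/

open Real Filter Topology

theorem hasDerivAt_sqrt_sub_mul_sq {b c x : ℝ} (hx : 0 < b - c * x ^ 2) :
    HasDerivAt (fun ρ => √(b - c * ρ ^ 2)) (-(c * x) / √(b - c * x ^ 2)) x := by
  refine ((((hasDerivAt_pow 2 x).const_mul c).const_sub b).sqrt hx.ne').congr_deriv ?_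
  field_simp
  ring

theorem hasDerivAt_mul_div_sqrt_sub_mul_sq (a : ℝ) {b c x : ℝ} (hx : 0 < b - c * x ^ 2) :
    HasDerivAt (fun ρ => a * ρ / √(b - c * ρ ^ 2)) (a * b / √(b - c * x ^ 2) ^ 3) x := by
  have hpos : 0 < √(b - c * x ^ 2) := sqrt_pos.2 hx
  refine (((hasDerivAt_id' x).const_mul a).fun_div (hasDerivAt_sqrt_sub_mul_sq hx)
    hpos.ne').congr_deriv ?_
  have hsq : √(b - c * x ^ 2) ^ 2 = b - c * x ^ 2 := sq_sqrt hx.le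
  field_simp
  linear_combination a * hsq

theorem hasDerivAt_div_sqrt_sub_mul_sq_pow_three (k : ℝ) {b c x : ℝ} (hx : 0 < b - c * x ^ 2) :
    HasDerivAt (fun ρ => k / √(b - c * ρ ^ 2) ^ 3)
      (3 * k * c * x / √(b - c * x ^ 2) ^ 5) x := by
  have hpos : 0 < √(b - c * x ^ 2) := sqrt_pos.2 hx
  refine ((hasDerivAt_const x k).fun_div ((hasDerivAt_sqrt_sub_mul_sq hx).fun_pow 3)
    (pow_ne_zero 3 hpos.ne')).congr_deriv ?_
  field_simp
  ring

theorem deriv_mul_div_sqrt_sub_mul_sq (a : ℝ) {b c x : ℝ} (hx : 0 < b - c * x ^ 2) :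
    deriv (fun ρ => a * ρ / √(b - c * ρ ^ 2)) x = a * b / √(b - c * x ^ 2) ^ 3 :=
  (hasDerivAt_mul_div_sqrt_sub_mul_sq a hx).deriv

theorem deriv_deriv_mul_div_sqrt_sub_mul_sq (a : ℝ) {b c x : ℝ} (hx : 0 < b - c * x ^ 2) :
    deriv (deriv fun ρ => a * ρ / √(b - c * ρ ^ 2)) x =
      3 * (a * b) * c * x / √(b - c * x ^ 2) ^ 5 := by
  have hderiv : deriv (fun ρ => a * ρ / √(b - c * ρ ^ 2)) =ᶠ[𝓝 x]
      fun y => a * b / √(b - c * y ^ 2) ^ 3 := by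
    filter_upwards [(isOpen_lt continuous_const
      (by fun_prop : Continuous fun y : ℝ => b - c * y ^ 2)).mem_nhds hx] with y hy
    exact deriv_mul_div_sqrt_sub_mul_sq a hy
  rw [hderiv.deriv_eq]
  exact (hasDerivAt_div_sqrt_sub_mul_sq_pow_three (a * b) hx).deriv

/-- The left-hand side of Eq. (CorWMode_g) for `d = 9`, in terms of the values `φ, φ', φ''` of the
profile and its first two derivatives at `ρ`. -/
noncomputable def waveMapResidual (ρ φ φ' φ'' : ℝ) : ℝ :=
  (1 - ρ ^ 2) * φ'' + (8 / ρ - 2 * ρ) * φ' - 8 * (φ + 14 * φ ^ 3 - 111 * φ ^ 5) / ρ ^ 2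

theorem waveMapResidual_eq_zero {ρ s : ℝ} (hρ : ρ ≠ 0) (hs : s ≠ 0)
    (hsq : s ^ 2 = 310 - 148 * ρ ^ 2) :
    waveMapResidual ρ (3 * ρ / s) (3 * 310 / s ^ 3) (3 * (3 * 310) * 148 * ρ / s ^ 5) = 0 := by
  unfold waveMapResidual
  field_simp
  linear_combination (-24 * s ^ 2 - 1332 * ρ ^ 2) * hsq

theorem stmt_3 (φ₀ : ℝ → ℝ)
    (hφ : φ₀ = fun ρ => 3 * ρ / Real.sqrt (2 * (155 - 74 * ρ^2))) :
    ∀ ρ ∈ Set.Ioo (0:ℝ) 1,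
      (1 - ρ^2) * deriv (deriv φ₀) ρ + (8/ρ - 2*ρ) * deriv φ₀ ρ
        - 8 * (φ₀ ρ + 14 * (φ₀ ρ)^3 - 111 * (φ₀ ρ)^5) / ρ^2 = 0 := by
  rintro ρ ⟨hρ₀, hρ₁⟩
  have hφ' : φ₀ = fun ρ => 3 * ρ / √(310 - 148 * ρ ^ 2) := by
    rw [hφ]
    ring_nf
  have hq : 0 < 310 - 148 * ρ ^ 2 := by nlinarith
  have hs : 0 < √(310 - 148 * ρ ^ 2) := sqrt_pos.2 hq
  change waveMapResidual ρ (φ₀ ρ) (deriv φ₀ ρ) (deriv (deriv φ₀) ρ) = 0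
  rw [hφ', deriv_mul_div_sqrt_sub_mul_sq 3 hq, deriv_deriv_mul_div_sqrt_sub_mul_sq 3 hq]
  exact waveMapResidual_eq_zero hρ₀.ne' hs.ne' (sq_sqrt hq.le)
end

section
/- Let d ≥ 8 be an integer, and for ρ ∈ (0,1] set φ(ρ) = aρ/√(b − ρ²) with a = √(d/E(d)), b = 1 + d/2 − 7d(d−1)/E(d), E(d) = √((46d²−291d−49)(d−1)) + 7(d−1). Then φ satisfies (1−ρ²)φ''(ρ) + ((d−1)/ρ − 2ρ)φ'(ρ) − (d−1)(φ(ρ) + 14φ(ρ)³ − 3(23d−170)φ(ρ)⁵)/ρ² = 0 for all ρ ∈ (0,1). -/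
/-!
Write `u = √(b - ρ²)`. For `φ = aρ/u` one has `φ' = ab/u³` and `φ'' = 3abρ/u⁵`, so after
multiplying by `ρu⁵/a` the equation becomes a polynomial identity in `ρ²` (using `u² = b - ρ²`).
It holds identically as soon as two coefficient conditions on `a²` and `b` hold, and for the
given `a`, `b` these reduce to the quadratic equation `E² = 14(d-1)E + 2d(d-1)(23d-170)`
satisfied by `E(d)`.
-/

open Real Filter Topology

noncomputable def profile (a b : ℝ) (ρ : ℝ) : ℝ := a * ρ / √(b - ρ ^ 2)

section Profile

variable {a b ρ : ℝ}

theorem hasDerivAt_sqrt_sub_sq (hρ : ρ ^ 2 < b) :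
    HasDerivAt (fun x => √(b - x ^ 2)) (-ρ / √(b - ρ ^ 2)) ρ := by
  have hsub : HasDerivAt (fun x : ℝ => b - x ^ 2) (-(2 * ρ)) ρ := by
    simpa using (hasDerivAt_pow 2 ρ).const_sub b
  convert hsub.sqrt (sub_pos.2 hρ).ne' using 1
  field_simp

theorem hasDerivAt_profile (a : ℝ) (hρ : ρ ^ 2 < b) :
    HasDerivAt (profile a b) (a * b / √(b - ρ ^ 2) ^ 3) ρ := by
  have hu : 0 < √(b - ρ ^ 2) := sqrt_pos.2 (sub_pos.2 hρ)
  have hu2 : √(b - ρ ^ 2) ^ 2 = b - ρ ^ 2 := sq_sqrt (sub_pos.2 hρ).le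
  refine (((hasDerivAt_id' ρ).const_mul a).fun_div (hasDerivAt_sqrt_sub_sq hρ) hu.ne').congr_deriv ?_
  field_simp
  linear_combination a * hu2

theorem hasDerivAt_div_sqrt_sub_sq_pow_three (c : ℝ) (hρ : ρ ^ 2 < b) :
    HasDerivAt (fun x => c / √(b - x ^ 2) ^ 3) (3 * c * ρ / √(b - ρ ^ 2) ^ 5) ρ := by
  have hu : 0 < √(b - ρ ^ 2) := sqrt_pos.2 (sub_pos.2 hρ)
  refine ((hasDerivAt_const ρ c).fun_div ((hasDerivAt_sqrt_sub_sq hρ).fun_pow 3)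
    (pow_ne_zero 3 hu.ne')).congr_deriv ?_
  field_simp
  ring

theorem deriv_deriv_profile (hρ : ρ ^ 2 < b) :
    deriv (deriv (profile a b)) ρ = 3 * (a * b) * ρ / √(b - ρ ^ 2) ^ 5 := by
  have hderiv : deriv (profile a b) =ᶠ[𝓝 ρ] fun x => a * b / √(b - x ^ 2) ^ 3 :=
    ((isOpen_lt (continuous_pow 2) continuous_const).eventually_mem hρ).mono
      fun x hx => (hasDerivAt_profile a hx).deriv
  rw [hderiv.deriv_eq]
  exact (hasDerivAt_div_sqrt_sub_sq_pow_three (a * b) hρ).deriv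

theorem profile_ode {n α β : ℝ} (h₁ : 3 + n = 2 * b + α * n * a ^ 2)
    (h₂ : b + n = α * n * a ^ 2 + β * n * a ^ 4) (hρ : 0 < ρ) (hρb : ρ ^ 2 < b) :
    (1 - ρ ^ 2) * deriv (deriv (profile a b)) ρ + (n / ρ - 2 * ρ) * deriv (profile a b) ρ
      - n * (profile a b ρ + α * profile a b ρ ^ 3 - β * profile a b ρ ^ 5) / ρ ^ 2 = 0 := by
  rw [deriv_deriv_profile hρb, (hasDerivAt_profile a hρb).deriv, profile]
  set u := √(b - ρ ^ 2)
  have hu : 0 < u := sqrt_pos.2 (sub_pos.2 hρb)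
  have hu2 : u ^ 2 = b - ρ ^ 2 := sq_sqrt (sub_pos.2 hρb).le
  have hpoly : 3 * b * ρ ^ 2 * (1 - ρ ^ 2) + (n - 2 * ρ ^ 2) * b * u ^ 2
      - n * (u ^ 4 + α * a ^ 2 * ρ ^ 2 * u ^ 2 - β * a ^ 4 * ρ ^ 4) = 0 := by
    linear_combination (b * ρ ^ 2) * h₁ - ρ ^ 4 * h₂
      + ((n - 2 * ρ ^ 2) * b - n * (u ^ 2 + (b - ρ ^ 2) + α * a ^ 2 * ρ ^ 2)) * hu2
  field_simp
  linear_combination a * hpoly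

end Profile

theorem profile_coeff_one {D E a b : ℝ} (hE : E ≠ 0) (ha : a ^ 2 = D / E)
    (hb : b = 1 + D / 2 - 7 * D * (D - 1) / E) :
    3 + (D - 1) = 2 * b + 14 * (D - 1) * a ^ 2 := by
  rw [ha, hb]
  field_simp
  ring

theorem profile_coeff_two {D E a b : ℝ} (hE : E ≠ 0)
    (hE2 : E ^ 2 = 14 * (D - 1) * E + 2 * D * (D - 1) * (23 * D - 170))
    (ha : a ^ 2 = D / E) (hb : b = 1 + D / 2 - 7 * D * (D - 1) / E) :
    b + (D - 1) = 14 * (D - 1) * a ^ 2 + 3 * (23 * D - 170) * (D - 1) * a ^ 4 := by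
  rw [show a ^ 4 = (a ^ 2) ^ 2 by ring, ha, hb]
  field_simp
  linear_combination (3 * D) * hE2

theorem stmt_4 (d : ℤ) (hd : 8 ≤ d)
    (E a b : ℝ)
    (hE : E = Real.sqrt ((46*(d:ℝ)^2 - 291*(d:ℝ) - 49) * ((d:ℝ) - 1)) + 7*((d:ℝ) - 1))
    (ha : a = Real.sqrt ((d:ℝ) / E))
    (hb : b = 1 + (d:ℝ)/2 - 7*(d:ℝ)*((d:ℝ)-1)/E)
    (φ : ℝ → ℝ)
    (hφ : φ = fun ρ => a * ρ / Real.sqrt (b - ρ^2)) :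
    ∀ ρ ∈ Set.Ioo (0:ℝ) 1,
      (1 - ρ^2) * deriv (deriv φ) ρ + (((d:ℝ) - 1)/ρ - 2*ρ) * deriv φ ρ
        - ((d:ℝ) - 1) * (φ ρ + 14 * (φ ρ)^3 - 3*(23*(d:ℝ) - 170) * (φ ρ)^5) / ρ^2 = 0 := by
  rintro ρ ⟨hρ0, hρ1⟩
  have hd8 : (8 : ℝ) ≤ d := by exact_mod_cast hd
  set X := (46 * (d : ℝ) ^ 2 - 291 * d - 49) * (d - 1)
  have hX : X = (7 * (d - 1)) ^ 2 + 2 * d * (d - 1) * (23 * d - 170) := by ring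
  have hX7 : 7 * ((d : ℝ) - 1) < √X := lt_sqrt_of_sq_lt (by rw [hX]; nlinarith)
  have hE14 : 14 * ((d : ℝ) - 1) < E := by linarith
  have hE0 : 0 < E := by linarith
  have hE2 : E ^ 2 = 14 * (d - 1) * E + 2 * d * (d - 1) * (23 * d - 170) := by
    rw [hE]
    linear_combination sq_sqrt (show 0 ≤ X by rw [hX]; nlinarith)
  have ha2 : a ^ 2 = d / E := by rw [ha]; exact sq_sqrt (div_nonneg (by linarith) hE0.le)
  have hb1 : 1 < b := by
    have : 7 * (d : ℝ) * (d - 1) / E < d / 2 := by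
      rw [div_lt_div_iff₀ hE0 two_pos]; nlinarith
    linarith
  subst hφ
  exact profile_ode (profile_coeff_one hE0.ne' ha2 hb) (profile_coeff_two hE0.ne' hE2 ha2 hb)
    hρ0 (by nlinarith)
end

section
/- The pair g(ρ) = (φ₀'(ρ), ρφ₀''(ρ) + 2φ₀'(ρ)), with φ₀(ρ) = 3ρ/√(2(155−74ρ²)), satisfies the eigenvalue system at λ = 1: g₂(ρ) = ρg₁'(ρ) + 2g₁(ρ), and (1−ρ²)g₁''(ρ) + (10/ρ − 6ρ)g₁'(ρ) − (6 + (8/ρ²)n'(φ₀(ρ)))g₁(ρ) = 0 for ρ ∈ (0,1), where n(x) = 14x³ − 111x⁵. -/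
/-! With `q = 310 - 148 ρ²` and `w = √q` we have `φ₀ = 3ρ / w`, and differentiating `p / wⁿ`
gives `(p' q - (n/2) p q') / wⁿ⁺²`. Hence `φ₀' = 930 / w³`, `φ₀'' = 412920 ρ / w⁵` and
`φ₀''' = 412920 (310 + 592 ρ²) / w⁷`. The first equation is the definition of `g₂`; the second
becomes a rational identity in `ρ` and `w` that holds modulo `w² = q`. -/

theorem HasDerivAt.div_sqrt_pow {p q : ℝ → ℝ} {p' q' x : ℝ} (n : ℕ) (hp : HasDerivAt p p' x)
    (hq : HasDerivAt q q' x) (hx : 0 < q x) :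
    HasDerivAt (fun y => p y / √(q y) ^ n)
      ((p' * q x - n / 2 * p x * q') / √(q x) ^ (n + 2)) x := by
  have hwn : HasDerivAt (fun y => √(q y) ^ n) (n * √(q x) ^ (n - 1) * (q' / (2 * √(q x)))) x :=
    (hq.sqrt hx.ne').pow n
  have hw : 0 < √(q x) := Real.sqrt_pos.mpr hx
  refine (hp.div hwn (by positivity)).congr_deriv ?_
  have hsq := Real.sq_sqrt hx.le
  generalize √(q x) = w at hw hsq ⊢
  rw [← hsq]
  rcases n with _ | n
  · simp
    field_simp
  · field_simp
    push_cast
    ring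

theorem IsOpen.hasDerivAt_deriv {U : Set ℝ} (hU : IsOpen U) {f f' f'' : ℝ → ℝ}
    (hf : ∀ x ∈ U, HasDerivAt f (f' x) x) (hf' : ∀ x ∈ U, HasDerivAt f' (f'' x) x) :
    ∀ x ∈ U, HasDerivAt (deriv f) (f'' x) x := fun x hx =>
  (hf' x hx).congr_of_eventuallyEq <|
    Filter.eventually_of_mem (hU.mem_nhds hx) fun y hy => (hf y hy).deriv

theorem hasDerivAt_sub_mul_sq (a b x : ℝ) :
    HasDerivAt (fun y => a - b * y ^ 2) (-(2 * b * x)) x :=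
  (((hasDerivAt_pow 2 x).const_mul b).const_sub a).congr_deriv (by simp; ring)

section

variable {a b : ℝ} (c : ℝ) {x : ℝ}

theorem hasDerivAt_mul_div_sqrt (hx : 0 < a - b * x ^ 2) :
    HasDerivAt (fun y => c * y / √(a - b * y ^ 2)) (c * a / √(a - b * x ^ 2) ^ 3) x := by
  have := ((hasDerivAt_id x).const_mul c).div_sqrt_pow 1 (hasDerivAt_sub_mul_sq a b x) hx
  simp only [pow_one, id] at this
  exact this.congr_deriv (by norm_num; ring)

theorem hasDerivAt_div_sqrt_pow_three (hx : 0 < a - b * x ^ 2) :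
    HasDerivAt (fun y => c / √(a - b * y ^ 2) ^ 3) (3 * b * c * x / √(a - b * x ^ 2) ^ 5) x :=
  ((hasDerivAt_const x c).div_sqrt_pow 3 (hasDerivAt_sub_mul_sq a b x) hx).congr_deriv
    (by norm_num; ring)

theorem hasDerivAt_mul_div_sqrt_pow_five (hx : 0 < a - b * x ^ 2) :
    HasDerivAt (fun y => c * y / √(a - b * y ^ 2) ^ 5)
      (c * (a + 4 * b * x ^ 2) / √(a - b * x ^ 2) ^ 7) x := by
  have := ((hasDerivAt_id x).const_mul c).div_sqrt_pow 5 (hasDerivAt_sub_mul_sq a b x) hx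
  simp only [id] at this
  exact this.congr_deriv (by norm_num; ring)

end

theorem eigen_equation_closed_form {ρ w : ℝ} (hρ : ρ ≠ 0) (hw : w ≠ 0)
    (hw2 : w ^ 2 = 310 - 148 * ρ ^ 2) :
    (1 - ρ ^ 2) * (412920 * (310 + 592 * ρ ^ 2) / w ^ 7)
      + (10 / ρ - 6 * ρ) * (412920 * ρ / w ^ 5)
      - (6 + 8 / ρ ^ 2 * (42 * (3 * ρ / w) ^ 2 - 555 * (3 * ρ / w) ^ 4)) * (930 / w ^ 3) = 0 := by
  field_simp
  -- the cleared numerator is a quadratic in `w²` vanishing at `w² = 310 - 148 ρ²`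
  linear_combination (-(412920 + 1651680 * ρ ^ 2 + 5580 * w ^ 2)) * hw2

theorem stmt_11 (φ₀ g₁ g₂ : ℝ → ℝ)
    (hφ : φ₀ = fun ρ => 3 * ρ / Real.sqrt (2 * (155 - 74 * ρ^2)))
    (hg₁ : g₁ = deriv φ₀)
    (hg₂ : g₂ = fun ρ => ρ * deriv (deriv φ₀) ρ + 2 * deriv φ₀ ρ) :
    ∀ ρ ∈ Set.Ioo (0:ℝ) 1,
      g₂ ρ = ρ * deriv g₁ ρ + 2 * g₁ ρ ∧
      (1 - ρ^2) * deriv (deriv g₁) ρ + (10/ρ - 6*ρ) * deriv g₁ ρ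
        - (6 + (8/ρ^2) * (42*(φ₀ ρ)^2 - 555*(φ₀ ρ)^4)) * g₁ ρ = 0 := by
  have hφ' : φ₀ = fun ρ => 3 * ρ / √(310 - 148 * ρ ^ 2) := by
    rw [hφ]; ring_nf
  set S := {x : ℝ | 0 < 310 - 148 * x ^ 2}
  have hS : IsOpen S := isOpen_lt continuous_const (by fun_prop)
  have h₁ : ∀ x ∈ S, HasDerivAt φ₀ (930 / √(310 - 148 * x ^ 2) ^ 3) x := fun x hx =>
    hφ' ▸ (hasDerivAt_mul_div_sqrt 3 hx).congr_deriv (by norm_num)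
  have h₂ : ∀ x ∈ S, HasDerivAt (deriv φ₀) (412920 * x / √(310 - 148 * x ^ 2) ^ 5) x :=
    hS.hasDerivAt_deriv h₁ fun x hx =>
      (hasDerivAt_div_sqrt_pow_three 930 hx).congr_deriv (by norm_num)
  have h₃ : ∀ x ∈ S, HasDerivAt (deriv (deriv φ₀))
      (412920 * (310 + 592 * x ^ 2) / √(310 - 148 * x ^ 2) ^ 7) x :=
    hS.hasDerivAt_deriv h₂ fun x hx =>
      (hasDerivAt_mul_div_sqrt_pow_five 412920 hx).congr_deriv (by norm_num)
  rintro ρ ⟨hρ₀, hρ₁⟩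
  have hρ : ρ ∈ S := by show 0 < 310 - 148 * ρ ^ 2; nlinarith
  subst hg₁ hg₂
  refine ⟨rfl, ?_⟩
  rw [(h₁ ρ hρ).deriv, (h₂ ρ hρ).deriv, (h₃ ρ hρ).deriv, hφ']
  exact eigen_equation_closed_form hρ₀.ne' (Real.sqrt_pos.mpr hρ).ne' (Real.sq_sqrt hρ.le)
end
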